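/- If A, B, C, D, E, F are all closed under stuttering, then the formula (¬↑A ∨ ○B ∨ C) U (↑D ∧ ○E ∧ F) is closed under stuttering, where ↑X := ¬X ∧ ○X. -/

import Mathlib

def State := String → Bool

def StSeq := ℕ → State

def drop (k : ℕ) (s : StSeq) : StSeq := fun n => s (k + n)

def stutter (s : StSeq) (i : ℕ) : StSeq := fun n => if n ≤ i then s n else s (n - 1)

def CUS (F : StSeq → Prop) : Prop := ∀ (s : StSeq) (i : ℕ), F s ↔ F (stutter s i)

def Var (a : String) : StSeq → Prop := fun s => s 0 a = true

def Not' (F : StSeq → Prop) : StSeq → Prop := fun s => ¬ F s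

def And' (F G : StSeq → Prop) : StSeq → Prop := fun s => F s ∧ G s

def Or' (F G : StSeq → Prop) : StSeq → Prop := fun s => F s ∨ G s

def Imp' (F G : StSeq → Prop) : StSeq → Prop := fun s => F s → G s

def Iff' (F G : StSeq → Prop) : StSeq → Prop := fun s => F s ↔ G s

def Next (F : StSeq → Prop) : StSeq → Prop := fun s => F (drop 1 s)

def Always (F : StSeq → Prop) : StSeq → Prop := fun s => ∀ k, F (drop k s)

def Ev (F : StSeq → Prop) : StSeq → Prop := fun s => ∃ k, F (drop k s)

def Until' (F G : StSeq → Prop) : StSeq → Prop :=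
  fun s => ∃ k, G (drop k s) ∧ ∀ j < k, F (drop j s)

def Up (F : StSeq → Prop) : StSeq → Prop := And' (Not' F) (Next F)

def Down (F : StSeq → Prop) : StSeq → Prop := And' F (Next (Not' F))

def AnyEdge (F : StSeq → Prop) : StSeq → Prop := Or' (Up F) (Down F)


/-! Stuttering a sequence at position `i` leaves its suffixes before `i` stuttered at a positive
position, turns the suffix at `i` into one stuttered at position `0`, and merely shifts the
suffixes after `i` by one. Formulas built from stutter-closed ones by `○` and Boolean connectives
are insensitive to stuttering at positive positions, so only the suffix at `i` needs care: there
`↑D` fails, because the repeated first state cannot be an edge, and `¬↑A` holds for the same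
reason. Hence an `U`-witness of one sequence transfers to the other, shifted by one when it lies
at or beyond `i`. -/

def CUSFromOne (φ : StSeq → Prop) : Prop := ∀ (t : StSeq) (m : ℕ), 0 < m → (φ (stutter t m) ↔ φ t)

lemma drop_stutter_of_le (s : StSeq) {i k : ℕ} (h : k ≤ i) :
    drop k (stutter s i) = stutter (drop k s) (i - k) := by
  funext n
  simp only [drop, stutter]
  by_cases hn : k + n ≤ i
  · rw [if_pos hn, if_pos (by omega)]
  · rw [if_neg hn, if_neg (by omega), show k + n - 1 = k + (n - 1) by omega]

lemma drop_stutter_self (s : StSeq) (i : ℕ) : drop i (stutter s i) = stutter (drop i s) 0 := by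
  rw [drop_stutter_of_le s le_rfl, Nat.sub_self]

lemma drop_stutter_of_lt (s : StSeq) {i k : ℕ} (h : i < k) :
    drop k (stutter s i) = drop (k - 1) s := by
  funext n
  simp only [drop, stutter]
  rw [if_neg (by omega), show k + n - 1 = k - 1 + n by omega]

lemma drop_succ_stutter_of_le (s : StSeq) {i k : ℕ} (h : i ≤ k) :
    drop (k + 1) (stutter s i) = drop k s := by
  rw [drop_stutter_of_lt s (by omega : i < k + 1), Nat.add_sub_cancel]

lemma drop_one_stutter_zero (t : StSeq) : drop 1 (stutter t 0) = t := by
  rw [drop_succ_stutter_of_le t le_rfl]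
  funext n
  simp [drop]

namespace CUS

lemma cusFromOne {φ : StSeq → Prop} (h : CUS φ) : CUSFromOne φ :=
  fun t m _ => (h t m).symm

lemma next {φ : StSeq → Prop} (h : CUS φ) : CUSFromOne (Next φ) := by
  intro t m hm
  simp only [Next]
  rw [drop_stutter_of_le t hm]
  exact (h (drop 1 t) (m - 1)).symm

lemma up {φ : StSeq → Prop} (h : CUS φ) : CUSFromOne (Up φ) :=
  fun t m hm => and_congr (not_congr (h.cusFromOne t m hm)) (h.next t m hm)

lemma not_up_stutter_zero {φ : StSeq → Prop} (h : CUS φ) (t : StSeq) : ¬ Up φ (stutter t 0) := by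
  rintro ⟨hnot, hnext⟩
  rw [Next, drop_one_stutter_zero] at hnext
  exact hnot ((h t 0).mp hnext)

end CUS

namespace CUSFromOne

lemma not {φ : StSeq → Prop} (h : CUSFromOne φ) : CUSFromOne (Not' φ) :=
  fun t m hm => not_congr (h t m hm)

lemma and {φ ψ : StSeq → Prop} (hφ : CUSFromOne φ) (hψ : CUSFromOne ψ) :
    CUSFromOne (And' φ ψ) :=
  fun t m hm => and_congr (hφ t m hm) (hψ t m hm)

lemma or {φ ψ : StSeq → Prop} (hφ : CUSFromOne φ) (hψ : CUSFromOne ψ) :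
    CUSFromOne (Or' φ ψ) :=
  fun t m hm => or_congr (hφ t m hm) (hψ t m hm)

lemma drop_stutter_iff {φ : StSeq → Prop} (h : CUSFromOne φ) (s : StSeq) {i j : ℕ} (hj : j < i) :
    φ (drop j (stutter s i)) ↔ φ (drop j s) := by
  rw [drop_stutter_of_le s hj.le]
  exact h _ _ (Nat.sub_pos_of_lt hj)

end CUSFromOne

section Until

variable {φ ψ : StSeq → Prop}

lemma until_stutter_of_until (hφ : CUSFromOne φ) (hφ₀ : ∀ t, φ (stutter t 0))
    (hψ : CUSFromOne ψ) {s : StSeq} (i : ℕ) (hs : Until' φ ψ s) : Until' φ ψ (stutter s i) := by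
  obtain ⟨k, hk, hbefore⟩ := hs
  rcases lt_or_ge k i with hki | hik
  · refine ⟨k, (hψ.drop_stutter_iff s hki).mpr hk, fun j hj => ?_⟩
    exact (hφ.drop_stutter_iff s (hj.trans hki)).mpr (hbefore j hj)
  · refine ⟨k + 1, by rwa [drop_succ_stutter_of_le s hik], fun j hj => ?_⟩
    rcases lt_trichotomy j i with hji | rfl | hij
    · exact (hφ.drop_stutter_iff s hji).mpr (hbefore j (by omega))
    · rw [drop_stutter_self]
      exact hφ₀ _
    · rw [drop_stutter_of_lt s hij]
      exact hbefore (j - 1) (by omega)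

lemma until_of_until_stutter (hφ : CUSFromOne φ) (hψ : CUSFromOne ψ)
    (hψ₀ : ∀ t, ¬ ψ (stutter t 0)) {s : StSeq} (i : ℕ) (hs : Until' φ ψ (stutter s i)) :
    Until' φ ψ s := by
  obtain ⟨k, hk, hbefore⟩ := hs
  rcases lt_trichotomy k i with hki | rfl | hik
  · refine ⟨k, (hψ.drop_stutter_iff s hki).mp hk, fun j hj => ?_⟩
    exact (hφ.drop_stutter_iff s (hj.trans hki)).mp (hbefore j hj)
  · rw [drop_stutter_self] at hk
    exact absurd hk (hψ₀ _)
  · refine ⟨k - 1, by rwa [drop_stutter_of_lt s hik] at hk, fun j hj => ?_⟩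
    rcases lt_or_ge j i with hji | hij
    · exact (hφ.drop_stutter_iff s hji).mp (hbefore j (by omega))
    · simpa [drop_succ_stutter_of_le s hij] using hbefore (j + 1) (by omega)

lemma cus_until (hφ : CUSFromOne φ) (hφ₀ : ∀ t, φ (stutter t 0))
    (hψ : CUSFromOne ψ) (hψ₀ : ∀ t, ¬ ψ (stutter t 0)) : CUS (Until' φ ψ) :=
  fun _ i => ⟨until_stutter_of_until hφ hφ₀ hψ i, until_of_until_stutter hφ hψ hψ₀ i⟩

end Until

theorem prop3 (A B C D E F : StSeq → Prop) (hA : CUS A) (hB : CUS B) (hC : CUS C)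
    (hD : CUS D) (hE : CUS E) (hF : CUS F) :
    CUS (Until' (Or' (Not' (Up A)) (Or' (Next B) C)) (And' (Up D) (And' (Next E) F))) :=
  cus_until (hA.up.not.or (hB.next.or hC.cusFromOne))
    (fun t => Or.inl (hA.not_up_stutter_zero t))
    (hD.up.and (hE.next.and hF.cusFromOne))
    (fun t h => hD.not_up_stutter_zero t h.1)
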